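/- arXiv:1502.04759 — 6 statements merged into one kernel-verified Lean document; each statement's English description precedes it below -/
import Mathlib

section
/- Randomized coordinate descent on a convex function satisfies the sublinear rate E[f(x^k)] - f* ≤ 2n·L_max·R₀²/k for all k ≥ 1, where the indices are chosen uniformly at random with replacement and the steplength is 1/L_max. -/
/-!
Along a coordinate, the coordinate-wise Lipschitz bound gives the descent inequality
`f (x - (1 / L) ∂ᵢf(x) eᵢ) ≤ f x - (∂ᵢf(x))² / (2L)`, so averaging over `i` lowers `f - f*` by at
least `‖∇f(x)‖² / (2nL)`. The iterates never leave the level set of `x⁰`, on which convexity gives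
`f x - f* ≤ ‖∇f(x)‖ R₀`. Together, `Φ = f - f*` satisfies `Φ² ≤ 2nLR₀² (Φ - 𝔼ᵢ Φ⁺)` pointwise;
averaging over the index sequence and Jensen turn this into `aₘ² ≤ C (aₘ - aₘ₊₁)` for
`aₘ = 𝔼 f(xᵐ) - f*`, a recursion that forces `aₖ ≤ C / k`.
-/

open Set
open scoped BigOperators

lemma le_add_mul_add_sq_of_abs_deriv_sub_le {φ φ' : ℝ → ℝ} {L : ℝ}
    (hφ : ∀ s, HasDerivAt φ (φ' s) s) (hφ' : ∀ s, |φ' s - φ' 0| ≤ L * |s|) (t : ℝ) :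
    φ t ≤ φ 0 + φ' 0 * t + L / 2 * t ^ 2 := by
  set ψ : ℝ → ℝ := fun s => φ 0 + φ' 0 * s + L / 2 * s ^ 2 - φ s
  have hψ : ∀ s, HasDerivAt ψ (φ' 0 + L * s - φ' s) s := fun s => by
    have := (((hasDerivAt_id s).const_mul (φ' 0)).const_add (φ 0)).add
      ((hasDerivAt_pow 2 s).const_mul (L / 2)) |>.sub (hφ s)
    exact this.congr_deriv (by push_cast; ring)
  have hψc : Continuous ψ := continuous_iff_continuousAt.2 fun s => (hψ s).continuousAt
  have hmono : MonotoneOn ψ (Ici 0) :=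
    monotoneOn_of_hasDerivWithinAt_nonneg (convex_Ici 0) hψc.continuousOn
      (fun s _ => (hψ s).hasDerivWithinAt) fun s hs => by
        rw [interior_Ici] at hs
        have := (abs_le.1 (hφ' s)).2
        rw [abs_of_pos hs] at this
        linarith
  have hanti : AntitoneOn ψ (Iic 0) :=
    antitoneOn_of_hasDerivWithinAt_nonpos (convex_Iic 0) hψc.continuousOn
      (fun s _ => (hψ s).hasDerivWithinAt) fun s hs => by
        rw [interior_Iic] at hs
        have := (abs_le.1 (hφ' s)).1
        rw [abs_of_neg hs] at this
        linarith
  have hψ0 : ψ 0 ≤ ψ t := by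
    rcases le_total 0 t with ht | ht
    · exact hmono self_mem_Ici ht ht
    · exact hanti ht self_mem_Iic ht
  simp only [ψ] at hψ0
  linarith

lemma HasGradientAt.hasDerivAt_add_smul {F : Type*} [NormedAddCommGroup F]
    [InnerProductSpace ℝ F] [CompleteSpace F] {f : F → ℝ} {g x v : F} {t : ℝ}
    (hf : HasGradientAt f g (x + t • v)) :
    HasDerivAt (fun s : ℝ => f (x + s • v)) (inner ℝ g v) t := by
  have hline : HasDerivAt (fun s : ℝ => x + s • v) v t := by
    simpa using ((hasDerivAt_id t).smul_const v).const_add x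
  have h := hf.hasFDerivAt.comp_hasDerivAt t hline
  rwa [InnerProductSpace.toDual_apply_apply] at h

lemma ConvexOn.add_le_of_hasFDerivAt {E : Type*} [NormedAddCommGroup E] [NormedSpace ℝ E]
    {f : E → ℝ} {f' : E →L[ℝ] ℝ} {x : E} (hf : ConvexOn ℝ univ f) (hx : HasFDerivAt f f' x)
    (y : E) : f x + f' (y - x) ≤ f y := by
  have hline : ConvexOn ℝ univ fun t : ℝ => f (x + t • (y - x)) := by
    simpa [Function.comp_def, AffineMap.lineMap_apply, add_comm] using
      hf.comp_affineMap (AffineMap.lineMap x y)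
  have hderiv : HasDerivAt (fun t : ℝ => f (x + t • (y - x))) (f' (y - x)) 0 := by
    have hseg : HasDerivAt (fun t : ℝ => x + t • (y - x)) (y - x) 0 := by
      simpa using ((hasDerivAt_id (0 : ℝ)).smul_const (y - x)).const_add x
    have hx' : HasFDerivAt f f' (x + (0 : ℝ) • (y - x)) := by simpa using hx
    exact hx'.comp_hasDerivAt 0 hseg
  have := hline.le_slope_of_hasDerivAt (mem_univ 0) (mem_univ 1) one_pos hderiv
  simp only [slope_def_field, zero_smul, add_zero, one_smul, add_sub_cancel, sub_zero,
    div_one] at this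
  linarith

lemma ConvexOn.sub_le_norm_mul_norm_of_hasGradientAt {F : Type*} [NormedAddCommGroup F]
    [InnerProductSpace ℝ F] [CompleteSpace F] {f : F → ℝ} {g x : F} (hf : ConvexOn ℝ univ f)
    (hx : HasGradientAt f g x) (y : F) : f x - f y ≤ ‖g‖ * ‖x - y‖ := by
  have h := hf.add_le_of_hasFDerivAt hx.hasFDerivAt y
  rw [InnerProductSpace.toDual_apply_apply, ← neg_sub x y, inner_neg_right] at h
  linarith [real_inner_le_norm g (x - y)]

section CoordinateDescent

variable {ι : Type*} [Fintype ι] [DecidableEq ι] {f : EuclideanSpace ℝ ι → ℝ}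
  {g : EuclideanSpace ℝ ι → EuclideanSpace ℝ ι} {L : ℝ}

lemma apply_add_smul_single_le (hg : ∀ x, HasGradientAt f (g x) x)
    (hL : ∀ x i (t : ℝ), |g (x + t • EuclideanSpace.single i 1) i - g x i| ≤ L * |t|)
    (x : EuclideanSpace ℝ ι) (i : ι) (t : ℝ) :
    f (x + t • EuclideanSpace.single i 1) ≤ f x + g x i * t + L / 2 * t ^ 2 := by
  have hφ (s : ℝ) : HasDerivAt (fun s : ℝ => f (x + s • EuclideanSpace.single i 1))
      (g (x + s • EuclideanSpace.single i 1) i) s := by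
    have h := (hg (x + s • EuclideanSpace.single i 1)).hasDerivAt_add_smul
    rwa [EuclideanSpace.inner_single_right, conj_trivial, one_mul] at h
  simpa using le_add_mul_add_sq_of_abs_deriv_sub_le hφ (by simpa using hL x i) t

noncomputable def coordDescentStep (g : EuclideanSpace ℝ ι → EuclideanSpace ℝ ι) (L : ℝ)
    (x : EuclideanSpace ℝ ι) (i : ι) : EuclideanSpace ℝ ι :=
  x - (1 / L) • g x i • EuclideanSpace.single i 1

lemma apply_coordDescentStep_le (hg : ∀ x, HasGradientAt f (g x) x)
    (hL : ∀ x i (t : ℝ), |g (x + t • EuclideanSpace.single i 1) i - g x i| ≤ L * |t|)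
    (hL0 : 0 < L) (x : EuclideanSpace ℝ ι) (i : ι) :
    f (coordDescentStep g L x i) ≤ f x - g x i ^ 2 / (2 * L) := by
  have hstep : coordDescentStep g L x i = x + (-(g x i / L)) • EuclideanSpace.single i 1 := by
    rw [coordDescentStep, smul_smul, sub_eq_add_neg, ← neg_smul, one_div_mul_eq_div]
  calc f (coordDescentStep g L x i)
      ≤ f x + g x i * -(g x i / L) + L / 2 * (-(g x i / L)) ^ 2 := by
        rw [hstep]; exact apply_add_smul_single_le hg hL x i _
    _ = f x - g x i ^ 2 / (2 * L) := by field_simp; ring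

lemma sq_sub_le_mul_sub_expect_coordDescentStep [Nonempty ι] (hf : ConvexOn ℝ univ f)
    (hg : ∀ x, HasGradientAt f (g x) x)
    (hL : ∀ x i (t : ℝ), |g (x + t • EuclideanSpace.single i 1) i - g x i| ≤ L * |t|)
    (hL0 : 0 < L) {xs : EuclideanSpace ℝ ι} (hxs : ∀ x, f xs ≤ f x) {y : EuclideanSpace ℝ ι}
    {R : ℝ} (hy : ‖y - xs‖ ≤ R) :
    (f y - f xs) ^ 2 ≤ 2 * (Fintype.card ι : ℝ) * L * R ^ 2 *
      (f y - f xs - 𝔼 i, (f (coordDescentStep g L y i) - f xs)) := by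
  have hn : (0 : ℝ) < Fintype.card ι := by exact_mod_cast Fintype.card_pos
  have hgap : 0 ≤ f y - f xs := sub_nonneg.2 (hxs y)
  have hgrad : f y - f xs ≤ ‖g y‖ * R :=
    (hf.sub_le_norm_mul_norm_of_hasGradientAt (hg y) xs).trans
      (mul_le_mul_of_nonneg_left hy (norm_nonneg _))
  have hdecrease : ∑ i, (g y i) ^ 2 / (2 * L) ≤
      ∑ _i : ι, (f y - f xs) - ∑ i, (f (coordDescentStep g L y i) - f xs) := by
    rw [← Finset.sum_sub_distrib]
    exact Finset.sum_le_sum fun i _ => by linarith [apply_coordDescentStep_le hg hL hL0 y i]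
  rw [← Finset.sum_div, Finset.sum_const, Finset.card_univ, nsmul_eq_mul,
    ← EuclideanSpace.real_norm_sq_eq] at hdecrease
  rw [Fintype.expect_eq_sum_div_card]
  calc (f y - f xs) ^ 2 ≤ (‖g y‖ * R) ^ 2 := pow_le_pow_left₀ hgap hgrad 2
    _ = R ^ 2 * ‖g y‖ ^ 2 := by ring
    _ ≤ R ^ 2 * (2 * L * (Fintype.card ι * (f y - f xs) -
          ∑ i, (f (coordDescentStep g L y i) - f xs))) := by
        gcongr; rwa [div_le_iff₀' (by positivity)] at hdecrease
    _ = _ := by field_simp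

end CoordinateDescent

lemma le_div_of_sq_le_mul_sub_succ {a : ℕ → ℝ} {C : ℝ} (hC : 0 ≤ C) (ha : ∀ m, 0 ≤ a m)
    (h : ∀ m, a m ^ 2 ≤ C * (a m - a (m + 1))) {k : ℕ} (hk : 1 ≤ k) : a k ≤ C / k := by
  have hmul : ∀ m : ℕ, m * a m ≤ C := by
    intro m
    induction m with
    | zero => simpa using hC
    | succ m ih =>
      rcases hC.eq_or_lt with rfl | hC
      · have h0 : a (m + 1) = 0 :=
          pow_eq_zero_iff two_ne_zero |>.1 (le_antisymm (by simpa using h (m + 1)) (sq_nonneg _))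
        simp [h0]
      · have hu := ha m
        have hm : (0 : ℝ) ≤ m := m.cast_nonneg
        -- with `w = C - m a_m ≥ 0`, `C² - (m+1) a_m (C - a_m) = (w - a_m/2)² + 3a_m²/4 + m w a_m`
        have : C * ((m + 1) * a (m + 1)) ≤ C * C := by
          nlinarith [mul_le_mul_of_nonneg_left (h m) (by positivity : (0 : ℝ) ≤ m + 1),
            mul_nonneg (mul_nonneg (sub_nonneg.2 ih) hu) hm, sq_nonneg (C - m * a m - a m / 2),
            sq_nonneg (a m)]
        push_cast
        exact le_of_mul_le_mul_left this hC
  rw [le_div_iff₀' (by exact_mod_cast hk)]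
  exact hmul k

lemma Fintype.expect_fin_succ_pi {α M : Type*} [Fintype α] [AddCommMonoid M] [Module ℚ≥0 M]
    {m : ℕ} (h : (Fin (m + 1) → α) → M) :
    𝔼 ω, h ω = 𝔼 ω : Fin m → α, 𝔼 i, h (Fin.snoc ω i) := by
  rw [← Fintype.expect_equiv (Fin.snocEquiv fun _ => α) _ _ fun _ => rfl,
    ← Finset.univ_product_univ, Finset.expect_product, Finset.expect_comm]
  rfl

lemma eq_foldl_ofFn {α E : Type*} {T : E → α → E} {x0 : E} {X : (ℕ → α) → ℕ → E}
    (hX0 : ∀ σ, X σ 0 = x0) (hXs : ∀ σ m, X σ (m + 1) = T (X σ m) (σ m)) (σ : ℕ → α) (m : ℕ) :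
    X σ m = (List.ofFn fun j : Fin m => σ j).foldl T x0 := by
  induction m with
  | zero => simp [hX0]
  | succ m ih =>
    rw [hXs, ih, List.ofFn_succ', List.concat_eq_append, List.foldl_append]
    rfl

theorem sq_expect_le_mul_sub_expect_foldl {α E : Type*} [Fintype α] [Nonempty α]
    (T : E → α → E) (x0 : E) {Φ : E → ℝ} {S : Set E} {C : ℝ}
    (hx0 : x0 ∈ S) (hT : ∀ y ∈ S, ∀ i, T y i ∈ S)
    (hΦ : ∀ y ∈ S, Φ y ^ 2 ≤ C * (Φ y - 𝔼 i, Φ (T y i))) (m : ℕ) :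
    (𝔼 ω : Fin m → α, Φ ((List.ofFn ω).foldl T x0)) ^ 2 ≤
      C * (𝔼 ω : Fin m → α, Φ ((List.ofFn ω).foldl T x0) -
        𝔼 ω : Fin (m + 1) → α, Φ ((List.ofFn ω).foldl T x0)) := by
  have hS (l : List α) : l.foldl T x0 ∈ S := by
    induction l using List.reverseRecOn with
    | nil => exact hx0
    | append_singleton l i ih => simpa using hT _ ih i
  have hjensen := Finset.expect_mul_sq_le_sq_mul_sq Finset.univ
    (fun ω : Fin m → α => Φ ((List.ofFn ω).foldl T x0)) fun _ => 1
  simp only [mul_one, one_pow, Fintype.expect_const] at hjensen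
  rw [Fintype.expect_fin_succ_pi]
  simp only [List.ofFn_succ', Fin.snoc_castSucc, Fin.snoc_last, List.concat_eq_append,
    List.foldl_append, List.foldl_cons, List.foldl_nil]
  calc _ ≤ _ := hjensen
    _ ≤ 𝔼 ω : Fin m → α,
          C * (Φ ((List.ofFn ω).foldl T x0) - 𝔼 i, Φ (T ((List.ofFn ω).foldl T x0) i)) :=
        Finset.expect_le_expect fun ω _ => hΦ _ (hS _)
    _ = _ := by rw [← Finset.mul_expect, Finset.expect_sub_distrib]

/-- Sublinear rate of randomized coordinate descent on a convex function:
`E[f(x^k)] - f* ≤ 2 n Lmax R₀² / k`. The expectation over the i.i.d. uniform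
indices `i_0,…,i_{k-1}` is written as an average over all `ω : Fin k → Fin n`. -/
theorem rcd_sublinear_rate (n : ℕ) (hn : 0 < n)
    (f : EuclideanSpace ℝ (Fin n) → ℝ)
    (g : EuclideanSpace ℝ (Fin n) → EuclideanSpace ℝ (Fin n))
    (hconv : ConvexOn ℝ Set.univ f)
    (hdiff : ∀ x, HasGradientAt f (g x) x)
    (Lmax : ℝ) (hLmax : 0 < Lmax)
    (hLip : ∀ (x : EuclideanSpace ℝ (Fin n)) (i : Fin n) (t : ℝ),
      |g (x + t • EuclideanSpace.single i 1) i - g x i| ≤ Lmax * |t|)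
    (fstar : ℝ) (hfstar : ∀ x, fstar ≤ f x) (hattain : ∃ x, f x = fstar)
    (x0 : EuclideanSpace ℝ (Fin n)) (R0 : ℝ)
    (hR0 : ∀ xstar, f xstar = fstar → ∀ x, f x ≤ f x0 → ‖x - xstar‖ ≤ R0)
    (X : (ℕ → Fin n) → ℕ → EuclideanSpace ℝ (Fin n))
    (hX0 : ∀ ω, X ω 0 = x0)
    (hXs : ∀ ω k, X ω (k + 1) =
      X ω k - (1 / Lmax) • (g (X ω k) (ω k)) • EuclideanSpace.single (ω k) 1)
    (k : ℕ) (hk : 1 ≤ k) :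
    ((n : ℝ) ^ k)⁻¹ *
        (∑ ω : Fin k → Fin n,
          f (X (fun j => if h : j < k then ω ⟨j, h⟩ else ⟨0, hn⟩) k)) - fstar
      ≤ 2 * n * Lmax * R0 ^ 2 / k := by
  obtain ⟨xs, rfl⟩ := hattain
  have : Nonempty (Fin n) := ⟨⟨0, hn⟩⟩
  have hX : ∀ σ m,
      X σ m = (List.ofFn fun j : Fin m => σ j).foldl (coordDescentStep g Lmax) x0 :=
    eq_foldl_ofFn hX0 hXs
  have hlhs : ((n : ℝ) ^ k)⁻¹ *
        (∑ ω : Fin k → Fin n,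
          f (X (fun j => if h : j < k then ω ⟨j, h⟩ else ⟨0, hn⟩) k)) - f xs
      = 𝔼 ω : Fin k → Fin n, (f ((List.ofFn ω).foldl (coordDescentStep g Lmax) x0) - f xs) := by
    simp only [hX, Fin.is_lt, dif_pos, Fin.eta]
    rw [Finset.expect_sub_distrib, Fintype.expect_const, Fintype.expect_eq_sum_div_card,
      Fintype.card_fun, Fintype.card_fin, Fintype.card_fin]
    push_cast
    ring
  have hdescent (y : EuclideanSpace ℝ (Fin n)) (i : Fin n) :
      f (coordDescentStep g Lmax y i) ≤ f y := by
    linarith [apply_coordDescentStep_le hdiff hLip hLmax y i,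
      div_nonneg (sq_nonneg (g y i)) (by positivity : (0 : ℝ) ≤ 2 * Lmax)]
  have hrecursion := sq_expect_le_mul_sub_expect_foldl (coordDescentStep g Lmax) x0
    (Φ := fun y => f y - f xs) (S := {y | f y ≤ f x0}) (show f x0 ≤ f x0 from le_rfl)
    (fun y hy i => (hdescent y i).trans hy)
    (fun y hy => sq_sub_le_mul_sub_expect_coordDescentStep hconv hdiff hLip hLmax hfstar
      (hR0 xs rfl y hy))
  rw [hlhs]
  simpa using le_div_of_sq_le_mul_sub_succ (by positivity)
    (fun m => Finset.expect_nonneg fun ω _ => sub_nonneg.2 (hfstar _)) hrecursion hk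
end

section
/- If additionally f is strongly convex with modulus σ > 0, randomized coordinate descent with steplength 1/L_max satisfies the linear rate E[f(x^k)] - f* ≤ (1 - σ/(n·L_max))^k (f(x⁰) - f*). -/
/-!
One coordinate step with steplength `1/L` decreases `f` by at least `(∂ᵢf)²/(2L)`, by the
one-dimensional descent lemma along the `i`-th coordinate line. Averaging over the `n` coordinates
gives a decrease of `‖∇f‖²/(2nL)`, and strong convexity gives the Polyak–Łojasiewicz inequality
`f x - f* ≤ ‖∇f x‖²/(2σ)`. Hence the expected optimality gap contracts by `1 - σ/(nL)` per
iteration; the expectation over `i₀, …, i_{k-1}` is the uniform average over `Fin k → Fin n`,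
which splits off the last index because `x^k` depends only on the first `k` indices.
-/

open Finset
open scoped BigOperators

theorem le_add_deriv_mul_add_sq_of_nonneg {φ ψ : ℝ → ℝ} {L t : ℝ}
    (hφ : ∀ s, HasDerivAt φ (ψ s) s) (hψ : ∀ s, |ψ s - ψ 0| ≤ L * |s|) (ht : 0 ≤ t) :
    φ t ≤ φ 0 + ψ 0 * t + L / 2 * t ^ 2 := by
  let h : ℝ → ℝ := fun s => φ 0 + ψ 0 * s + L / 2 * s ^ 2 - φ s
  have hh : ∀ s, HasDerivAt h (ψ 0 + L * s - ψ s) s := fun s => by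
    have := ((((hasDerivAt_id s).const_mul (ψ 0)).const_add (φ 0)).add
      ((hasDerivAt_pow 2 s).const_mul (L / 2))).sub (hφ s)
    exact this.congr_deriv (by simp only [Nat.cast_ofNat, Nat.add_one_sub_one, pow_one]; ring)
  have hmono : MonotoneOn h (Set.Ici 0) := by
    refine monotoneOn_of_hasDerivWithinAt_nonneg (convex_Ici 0)
      (fun s _ => (hh s).continuousAt.continuousWithinAt)
      (fun s _ => (hh s).hasDerivWithinAt) fun s hs => ?_
    rw [interior_Ici] at hs
    have := (abs_le.mp (hψ s)).2
    rw [abs_of_pos hs] at this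
    linarith
  have := hmono Set.self_mem_Ici ht ht
  simp only [h] at this
  linarith

theorem le_add_deriv_mul_add_sq {φ ψ : ℝ → ℝ} {L : ℝ}
    (hφ : ∀ s, HasDerivAt φ (ψ s) s) (hψ : ∀ s, |ψ s - ψ 0| ≤ L * |s|) (t : ℝ) :
    φ t ≤ φ 0 + ψ 0 * t + L / 2 * t ^ 2 := by
  rcases le_total 0 t with ht | ht
  · exact le_add_deriv_mul_add_sq_of_nonneg hφ hψ ht
  · -- reflect `s ↦ -s` to reduce to `0 ≤ -t`
    have := le_add_deriv_mul_add_sq_of_nonneg (φ := fun s => φ (-s)) (ψ := fun s => -ψ (-s))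
      (L := L) (fun s => by simpa [Function.comp_def] using (hφ (-s)).comp s (hasDerivAt_neg s))
      (fun s => by rw [← abs_neg]; simpa [neg_add_eq_sub] using hψ (-s)) (neg_nonneg.mpr ht)
    simpa using this

theorem sub_le_norm_sq_div_of_strongConvex {E : Type*} [NormedAddCommGroup E]
    [InnerProductSpace ℝ E] {f : E → ℝ} {g : E → E} {σ : ℝ} (hσ : 0 < σ)
    (hsc : ∀ x y, f x + inner ℝ (g x) (y - x) + σ / 2 * ‖y - x‖ ^ 2 ≤ f y) (x y : E) :
    f x - f y ≤ ‖g x‖ ^ 2 / (2 * σ) := by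
  have hcs : -(‖g x‖ * ‖y - x‖) ≤ inner ℝ (g x) (y - x) :=
    (abs_le.mp (abs_real_inner_le_norm _ _)).1
  rw [le_div_iff₀ (by positivity)]
  -- minimise the quadratic lower bound `f x - ‖g x‖ r + σ r² / 2` over `r = ‖y - x‖`
  nlinarith [hsc x y, sq_nonneg (‖g x‖ - σ * ‖y - x‖)]

section CoordinateDescent

variable {n : ℕ} {f : EuclideanSpace ℝ (Fin n) → ℝ}
  {g : EuclideanSpace ℝ (Fin n) → EuclideanSpace ℝ (Fin n)} {σ L : ℝ}

noncomputable def coordStep (g : EuclideanSpace ℝ (Fin n) → EuclideanSpace ℝ (Fin n)) (L : ℝ)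
    (i : Fin n) (x : EuclideanSpace ℝ (Fin n)) : EuclideanSpace ℝ (Fin n) :=
  x - (1 / L) • g x i • EuclideanSpace.single i 1

theorem hasDerivAt_comp_add_smul_single (hf : ∀ x, HasGradientAt f (g x) x)
    (x : EuclideanSpace ℝ (Fin n)) (i : Fin n) (t : ℝ) :
    HasDerivAt (fun s : ℝ => f (x + s • EuclideanSpace.single i 1))
      (g (x + t • EuclideanSpace.single i 1) i) t := by
  have hline : HasDerivAt (fun s : ℝ => x + s • EuclideanSpace.single i (1 : ℝ))
      (EuclideanSpace.single i 1) t := by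
    simpa using ((hasDerivAt_id t).smul_const (EuclideanSpace.single i (1 : ℝ))).const_add x
  refine ((hf _).hasFDerivAt.comp_hasDerivAt t hline).congr_deriv ?_
  simp [EuclideanSpace.inner_single_right]

theorem le_add_coord_mul_add_sq (hf : ∀ x, HasGradientAt f (g x) x)
    (hLip : ∀ x i t, |g (x + t • EuclideanSpace.single i 1) i - g x i| ≤ L * |t|)
    (x : EuclideanSpace ℝ (Fin n)) (i : Fin n) (t : ℝ) :
    f (x + t • EuclideanSpace.single i 1) ≤ f x + g x i * t + L / 2 * t ^ 2 := by
  simpa using le_add_deriv_mul_add_sq (hasDerivAt_comp_add_smul_single hf x i)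
    (fun s => by simpa using hLip x i s) t

theorem le_of_strongConvex_of_coordLipschitz (hf : ∀ x, HasGradientAt f (g x) x)
    (hsc : ∀ x y, f x + inner ℝ (g x) (y - x) + σ / 2 * ‖y - x‖ ^ 2 ≤ f y)
    (hLip : ∀ x i t, |g (x + t • EuclideanSpace.single i 1) i - g x i| ≤ L * |t|)
    (i : Fin n) : σ ≤ L := by
  have hlower := hsc 0 (EuclideanSpace.single i 1)
  have hupper := le_add_coord_mul_add_sq hf hLip 0 i 1
  simp only [sub_zero, EuclideanSpace.inner_single_right, Real.ringHom_apply, one_mul,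
    PiLp.norm_single, norm_one, one_pow, mul_one, one_smul, zero_add] at hlower hupper
  linarith

theorem apply_coordStep_le (hf : ∀ x, HasGradientAt f (g x) x) (hL : 0 < L)
    (hLip : ∀ x i t, |g (x + t • EuclideanSpace.single i 1) i - g x i| ≤ L * |t|)
    (x : EuclideanSpace ℝ (Fin n)) (i : Fin n) :
    f (coordStep g L i x) ≤ f x - g x i ^ 2 / (2 * L) := by
  have h := le_add_coord_mul_add_sq hf hLip x i (-g x i / L)
  rw [coordStep, smul_smul, sub_eq_add_neg, ← neg_smul]
  calc _ ≤ _ := by convert h using 4; ring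
    _ = _ := by field_simp; ring

theorem expect_coordStep_sub_le (hf : ∀ x, HasGradientAt f (g x) x) (hσ : 0 < σ)
    (hsc : ∀ x y, f x + inner ℝ (g x) (y - x) + σ / 2 * ‖y - x‖ ^ 2 ≤ f y) (hL : 0 < L)
    (hLip : ∀ x i t, |g (x + t • EuclideanSpace.single i 1) i - g x i| ≤ L * |t|)
    (hn : 0 < n) (x y : EuclideanSpace ℝ (Fin n)) :
    𝔼 i, f (coordStep g L i x) - f y ≤ (1 - σ / (n * L)) * (f x - f y) := by
  have hdescent : 𝔼 i, f (coordStep g L i x) ≤ f x - ‖g x‖ ^ 2 / (2 * L * n) :=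
    calc _ ≤ 𝔼 i, (f x - g x i ^ 2 / (2 * L)) :=
          expect_le_expect fun i _ => apply_coordStep_le hf hL hLip x i
      _ = _ := by
        rw [Fintype.expect_eq_sum_div_card, EuclideanSpace.real_norm_sq_eq]
        simp only [sum_sub_distrib, sum_const, card_univ, Fintype.card_fin, nsmul_eq_mul,
          ← sum_div]
        field_simp
  have hgrad : σ / (n * L) * (f x - f y) ≤ ‖g x‖ ^ 2 / (2 * L * n) :=
    calc _ ≤ σ / (n * L) * (‖g x‖ ^ 2 / (2 * σ)) := by
          gcongr; exact sub_le_norm_sq_div_of_strongConvex hσ hsc x y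
      _ = _ := by field_simp
  linarith

end CoordinateDescent

section RandomPaths

variable {ι α : Type*} {x₀ : α} {T : ι → α → α} {X : (ℕ → ι) → ℕ → α}

theorem apply_eq_of_forall_lt_eq (hX0 : ∀ ω, X ω 0 = x₀)
    (hXs : ∀ ω m, X ω (m + 1) = T (ω m) (X ω m)) {m : ℕ} {ω ω' : ℕ → ι}
    (h : ∀ j < m, ω j = ω' j) : X ω m = X ω' m := by
  induction m with
  | zero => rw [hX0, hX0]
  | succ m ih =>
    rw [hXs, hXs, ih fun j hj => h j (by omega), h m m.lt_succ_self]

theorem expect_path_succ [Fintype ι] (hX0 : ∀ ω, X ω 0 = x₀)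
    (hXs : ∀ ω m, X ω (m + 1) = T (ω m) (X ω m)) (d : ι) (F : α → ℝ) (k : ℕ) :
    𝔼 ω : Fin (k + 1) → ι, F (X (fun j => if h : j < k + 1 then ω ⟨j, h⟩ else d) (k + 1))
      = 𝔼 ω : Fin k → ι, 𝔼 i, F (T i (X (fun j => if h : j < k then ω ⟨j, h⟩ else d) k)) := by
  rw [← Fintype.expect_equiv (Fin.snocEquiv fun _ => ι) _ _ fun _ => rfl, ← univ_product_univ,
    expect_product, expect_comm]
  refine expect_congr rfl fun τ _ => expect_congr rfl fun i _ => ?_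
  rw [hXs]
  congr 2
  · simp [Fin.snoc]
  · refine apply_eq_of_forall_lt_eq hX0 hXs fun j hj => ?_
    simp [hj, Nat.lt_succ_of_lt hj, Fin.snoc]

end RandomPaths

theorem rcd_linear_rate_general (n : ℕ) (hn : 0 < n)
    (f : EuclideanSpace ℝ (Fin n) → ℝ)
    (g : EuclideanSpace ℝ (Fin n) → EuclideanSpace ℝ (Fin n))
    (hdiff : ∀ x, HasGradientAt f (g x) x)
    (σ : ℝ) (hσ : 0 < σ)
    (hsc : ∀ x y, f x + (inner ℝ (g x) (y - x) : ℝ) + σ / 2 * ‖y - x‖ ^ 2 ≤ f y)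
    (Lmax : ℝ) (hLmax : 0 < Lmax)
    (hLip : ∀ (x : EuclideanSpace ℝ (Fin n)) (i : Fin n) (t : ℝ),
      |g (x + t • EuclideanSpace.single i 1) i - g x i| ≤ Lmax * |t|)
    (fstar : ℝ) (hattain : ∃ x, f x = fstar)
    (x0 : EuclideanSpace ℝ (Fin n))
    (X : (ℕ → Fin n) → ℕ → EuclideanSpace ℝ (Fin n))
    (hX0 : ∀ ω, X ω 0 = x0)
    (hXs : ∀ ω k, X ω (k + 1) =
      X ω k - (1 / Lmax) • (g (X ω k) (ω k)) • EuclideanSpace.single (ω k) 1)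
    (k : ℕ) :
    ((n : ℝ) ^ k)⁻¹ *
        (∑ ω : Fin k → Fin n,
          f (X (fun j => if h : j < k then ω ⟨j, h⟩ else ⟨0, hn⟩) k)) - fstar
      ≤ (1 - σ / (n * Lmax)) ^ k * (f x0 - fstar) := by
  obtain ⟨xstar, rfl⟩ := hattain
  have : Nonempty (Fin n) := ⟨⟨0, hn⟩⟩
  have hrate : 0 ≤ 1 - σ / (n * Lmax) := by
    have hσL := le_of_strongConvex_of_coordLipschitz hdiff hsc hLip ⟨0, hn⟩
    have hn1 : (1 : ℝ) ≤ n := by exact_mod_cast hn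
    rw [sub_nonneg, div_le_one (by positivity)]
    nlinarith
  let gap : ℕ → ℝ := fun m =>
    𝔼 ω : Fin m → Fin n, f (X (fun j => if h : j < m then ω ⟨j, h⟩ else ⟨0, hn⟩) m) - f xstar
  have hstep : ∀ m, gap (m + 1) ≤ (1 - σ / (n * Lmax)) * gap m := fun m => by
    set y := fun ω : Fin m → Fin n => X (fun j => if h : j < m then ω ⟨j, h⟩ else ⟨0, hn⟩) m
    calc gap (m + 1) = 𝔼 ω, (𝔼 i, f (coordStep g Lmax i (y ω)) - f xstar) := by
          rw [expect_sub_distrib, Fintype.expect_const, ← expect_path_succ hX0 hXs]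
      _ ≤ 𝔼 ω, (1 - σ / (n * Lmax)) * (f (y ω) - f xstar) := expect_le_expect fun ω _ =>
          expect_coordStep_sub_le hdiff hσ hsc hLmax hLip hn (y ω) xstar
      _ = (1 - σ / (n * Lmax)) * gap m := by
          rw [← mul_expect, expect_sub_distrib, Fintype.expect_const]
  simpa [gap, hX0, Fintype.expect_eq_sum_div_card, div_eq_inv_mul] using
    le_geom hrate k fun m _ => hstep m

/-- Linear rate of randomized coordinate descent for a strongly convex function:
`E[f(x^k)] - f* ≤ (1 - σ/(n Lmax))^k (f(x⁰) - f*)`. -/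
theorem rcd_linear_rate (n : ℕ) (hn : 0 < n)
    (f : EuclideanSpace ℝ (Fin n) → ℝ)
    (g : EuclideanSpace ℝ (Fin n) → EuclideanSpace ℝ (Fin n))
    (hdiff : ∀ x, HasGradientAt f (g x) x)
    (σ : ℝ) (hσ : 0 < σ)
    (hsc : ∀ x y, f x + (inner ℝ (g x) (y - x) : ℝ) + σ / 2 * ‖y - x‖ ^ 2 ≤ f y)
    (Lmax : ℝ) (hLmax : 0 < Lmax)
    (hLip : ∀ (x : EuclideanSpace ℝ (Fin n)) (i : Fin n) (t : ℝ),
      |g (x + t • EuclideanSpace.single i 1) i - g x i| ≤ Lmax * |t|)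
    (fstar : ℝ) (hfstar : ∀ x, fstar ≤ f x) (hattain : ∃ x, f x = fstar)
    (x0 : EuclideanSpace ℝ (Fin n))
    (X : (ℕ → Fin n) → ℕ → EuclideanSpace ℝ (Fin n))
    (hX0 : ∀ ω, X ω 0 = x0)
    (hXs : ∀ ω k, X ω (k + 1) =
      X ω k - (1 / Lmax) • (g (X ω k) (ω k)) • EuclideanSpace.single (ω k) 1)
    (k : ℕ) :
    ((n : ℝ) ^ k)⁻¹ *
        (∑ ω : Fin k → Fin n,
          f (X (fun j => if h : j < k then ω ⟨j, h⟩ else ⟨0, hn⟩) k)) - fstar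
      ≤ (1 - σ / (n * Lmax)) ^ k * (f x0 - fstar) :=
  rcd_linear_rate_general n hn f g hdiff σ hσ hsc Lmax hLmax hLip fstar hattain x0 X hX0 hXs k
end

section
/- The randomized Kaczmarz iteration for a consistent linear system Aw = b with normalized rows satisfies E‖w^k - P(w^k)‖² ≤ (1 - λ_min,nz/m)^k ‖w⁰ - P(w⁰)‖², where P denotes projection onto the solution set and λ_min,nz is the smallest nonzero eigenvalue of AAᵀ. -/
/-!
Write `d w = ‖w - P w‖²`. Since `P w` minimises the distance from `w` to the affine solution set,
`w - P w` is orthogonal to `ker A`, hence lies in the row space of `A`, on which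
`‖A x‖² ≥ λ ‖x‖²`. A Kaczmarz step along a unit row `A i` is the orthogonal projection onto a
hyperplane through `P w`, so `d (step i w) ≤ ‖step i w - P w‖² = d w - (A i ⬝ᵥ (w - P w))²`.
Summing over `i` gives `∑ i, d (step i w) ≤ (m - λ) d w`, and `λ ≤ m` lets this be iterated
over the `m ^ k` index sequences of length `k`.
-/

open Matrix Finset

variable {K m n α β : Type*}

theorem Matrix.exists_transpose_mulVec_eq_of_dotProduct_eq_zero [Field K] [Fintype m] [Fintype n]
    (A : Matrix m n K) {v : n → K} (hv : ∀ z, A *ᵥ z = 0 → v ⬝ᵥ z = 0) :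
    ∃ u, Aᵀ *ᵥ u = v := by
  classical
  have hann : dotProductEquiv K n v ∈ (LinearMap.ker A.mulVecLin).dualAnnihilator :=
    (Submodule.mem_dualAnnihilator _).2 hv
  obtain ⟨ψ, hψ⟩ := (LinearMap.range_dualMap_eq_dualAnnihilator_ker A.mulVecLin).ge hann
  refine ⟨(dotProductEquiv K m).symm ψ, (dotProductEquiv K n).injective (LinearMap.ext fun z => ?_)⟩
  calc Aᵀ *ᵥ (dotProductEquiv K m).symm ψ ⬝ᵥ z = ψ (A *ᵥ z) := by
        rw [mulVec_transpose, ← dotProduct_mulVec]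
        exact LinearMap.congr_fun ((dotProductEquiv K m).apply_symm_apply ψ) _
    _ = v ⬝ᵥ z := LinearMap.congr_fun hψ z

section DotProduct

variable [Fintype n]

theorem sum_sq_eq_dotProduct_self [CommSemiring K] (x : n → K) : ∑ j, x j ^ 2 = x ⬝ᵥ x := by
  simp only [dotProduct, sq]

theorem sum_sub_sq_eq_dotProduct [CommRing K] (x y : n → K) :
    ∑ j, (x j - y j) ^ 2 = (x - y) ⬝ᵥ (x - y) :=
  sum_sq_eq_dotProduct_self (x - y)

theorem sub_smul_dotProduct_sub_smul [CommRing K] (x y : n → K) (t : K) :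
    (x - t • y) ⬝ᵥ (x - t • y) = x ⬝ᵥ x - 2 * t * (x ⬝ᵥ y) + t ^ 2 * (y ⬝ᵥ y) := by
  simp only [sub_dotProduct, dotProduct_sub, smul_dotProduct, dotProduct_smul, smul_eq_mul,
    dotProduct_comm y x]
  ring

theorem dotProduct_sq_le_mul [CommRing K] [LinearOrder K] [IsStrictOrderedRing K] (x y : n → K) :
    (x ⬝ᵥ y) ^ 2 ≤ (x ⬝ᵥ x) * (y ⬝ᵥ y) := by
  simpa only [dotProduct, sq] using sum_mul_sq_le_sq_mul_sq univ x y

theorem dotProduct_eq_zero_of_forall_le [Field K] [LinearOrder K] [IsStrictOrderedRing K]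
    {x y : n → K} (h : ∀ t : K, x ⬝ᵥ x ≤ (x - t • y) ⬝ᵥ (x - t • y)) : x ⬝ᵥ y = 0 := by
  -- `t ↦ ‖x - t • y‖² - ‖x‖²` is a nonnegative quadratic with no constant term
  have hquad : ∀ t : K, 0 ≤ (y ⬝ᵥ y) * (t * t) + -2 * (x ⬝ᵥ y) * t + 0 := fun t => by
    have := h t
    rw [sub_smul_dotProduct_sub_smul] at this
    linarith
  have := discrim_le_zero hquad
  rw [discrim] at this
  nlinarith [sq_nonneg (x ⬝ᵥ y)]

end DotProduct

section Kaczmarz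

variable [Fintype n] {A : Matrix m n K} {b : m → K}

def kaczmarzStep [CommRing K] (A : Matrix m n K) (b : m → K) (i : m) (w : n → K) : n → K :=
  w - (A *ᵥ w - b) i • A i

theorem kaczmarzStep_sub_dotProduct_self [CommRing K] {p : n → K} (hp : A *ᵥ p = b) {i : m}
    (hi : A i ⬝ᵥ A i = 1) (w : n → K) :
    (kaczmarzStep A b i w - p) ⬝ᵥ (kaczmarzStep A b i w - p)
      = (w - p) ⬝ᵥ (w - p) - (A *ᵥ (w - p)) i ^ 2 := by
  have hres : (A *ᵥ w - b) i = A i ⬝ᵥ (w - p) := by rw [← hp, ← mulVec_sub]; rfl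
  have hsub : kaczmarzStep A b i w - p = (w - p) - (A i ⬝ᵥ (w - p)) • A i := by
    rw [kaczmarzStep, hres, sub_right_comm]
  rw [hsub, sub_smul_dotProduct_sub_smul, hi, dotProduct_comm (w - p) (A i)]
  change _ = _ - (A i ⬝ᵥ (w - p)) ^ 2
  ring

variable [Fintype m] [Field K] [LinearOrder K] [IsStrictOrderedRing K]

theorem exists_transpose_mulVec_eq_sub_of_forall_le {w p : n → K} (hp : A *ᵥ p = b)
    (hmin : ∀ v, A *ᵥ v = b → (w - p) ⬝ᵥ (w - p) ≤ (w - v) ⬝ᵥ (w - v)) :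
    ∃ u, Aᵀ *ᵥ u = w - p := by
  refine A.exists_transpose_mulVec_eq_of_dotProduct_eq_zero fun z hz => ?_
  refine dotProduct_eq_zero_of_forall_le fun t => ?_
  have hsol : A *ᵥ (p + t • z) = b := by rw [mulVec_add, mulVec_smul, hz, smul_zero, add_zero, hp]
  simpa only [sub_add_eq_sub_sub] using hmin _ hsol

theorem sum_kaczmarzStep_sub_dotProduct_self_le {P : (n → K) → n → K}
    (hnorm : ∀ i, A i ⬝ᵥ A i = 1) (hP : ∀ w, A *ᵥ P w = b)
    (hPmin : ∀ w v, A *ᵥ v = b → (w - P w) ⬝ᵥ (w - P w) ≤ (w - v) ⬝ᵥ (w - v))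
    {c : K} (hc : ∀ v, (∃ u, Aᵀ *ᵥ u = v) → c * (v ⬝ᵥ v) ≤ (A *ᵥ v) ⬝ᵥ (A *ᵥ v)) (w : n → K) :
    ∑ i, (kaczmarzStep A b i w - P (kaczmarzStep A b i w)) ⬝ᵥ
        (kaczmarzStep A b i w - P (kaczmarzStep A b i w))
      ≤ (Fintype.card m - c) * ((w - P w) ⬝ᵥ (w - P w)) := by
  have hrow := exists_transpose_mulVec_eq_sub_of_forall_le (hP w) (hPmin w)
  calc _ ≤ ∑ i, ((w - P w) ⬝ᵥ (w - P w) - (A *ᵥ (w - P w)) i ^ 2) :=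
        sum_le_sum fun i _ =>
          (hPmin _ _ (hP w)).trans_eq (kaczmarzStep_sub_dotProduct_self (hP w) (hnorm i) w)
    _ = Fintype.card m * ((w - P w) ⬝ᵥ (w - P w))
          - (A *ᵥ (w - P w)) ⬝ᵥ (A *ᵥ (w - P w)) := by
        rw [sum_sub_distrib, sum_sq_eq_dotProduct_self, sum_const, card_univ, nsmul_eq_mul]
    _ ≤ _ := by linarith [hc _ hrow]

theorem le_card_of_forall_mul_dotProduct_le [Nonempty m] (hnorm : ∀ i, A i ⬝ᵥ A i = 1) {c : K}
    (hc : ∀ v, (∃ u, Aᵀ *ᵥ u = v) → c * (v ⬝ᵥ v) ≤ (A *ᵥ v) ⬝ᵥ (A *ᵥ v)) :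
    c ≤ Fintype.card m := by
  classical
  obtain ⟨i⟩ := ‹Nonempty m›
  have hrow : Aᵀ *ᵥ Pi.single i 1 = A i := by rw [mulVec_single_one]; rfl
  calc c = c * (A i ⬝ᵥ A i) := by rw [hnorm i, mul_one]
    _ ≤ ∑ j, (A j ⬝ᵥ A i) ^ 2 := by
        rw [sum_sq_eq_dotProduct_self]; exact hc _ ⟨_, hrow⟩
    _ ≤ ∑ j, (A j ⬝ᵥ A j) * (A i ⬝ᵥ A i) := sum_le_sum fun j _ => dotProduct_sq_le_mul _ _
    _ = Fintype.card m := by simp [hnorm]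

end Kaczmarz

def padSeq {k : ℕ} (a : α) (σ : Fin k → α) (l : ℕ) : α :=
  if h : l < k then σ ⟨l, h⟩ else a

theorem padSeq_snoc_of_lt {k l : ℕ} (a : α) (σ : Fin k → α) (x : α) (hl : l < k) :
    padSeq a (Fin.snoc σ x : Fin (k + 1) → α) l = padSeq a σ l := by
  simp only [padSeq, dif_pos hl, dif_pos (hl.trans k.lt_succ_self)]
  exact Fin.snoc_castSucc (α := fun _ => α) x σ ⟨l, hl⟩

theorem padSeq_snoc_self {k : ℕ} (a : α) (σ : Fin k → α) (x : α) :
    padSeq a (Fin.snoc σ x : Fin (k + 1) → α) k = x := by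
  simp only [padSeq, dif_pos k.lt_succ_self]
  exact Fin.snoc_last (α := fun _ => α) x σ

section Recursion

variable {W : (ℕ → α) → ℕ → β} {F : α → β → β} {w₀ : β}

theorem rec_eq_of_eqOn_Iio (hW0 : ∀ ω, W ω 0 = w₀) (hWs : ∀ ω k, W ω (k + 1) = F (ω k) (W ω k))
    {ω ω' : ℕ → α} {k : ℕ} (h : Set.EqOn ω ω' (Set.Iio k)) : W ω k = W ω' k := by
  induction k with
  | zero => rw [hW0, hW0]
  | succ k ih =>
    rw [hWs, hWs, ih (h.mono (Set.Iio_subset_Iio k.le_succ)), h k.lt_succ_self]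

theorem sum_rec_padSeq_succ [Fintype α] {M : Type*} [AddCommMonoid M]
    (hW0 : ∀ ω, W ω 0 = w₀) (hWs : ∀ ω k, W ω (k + 1) = F (ω k) (W ω k))
    (g : β → M) (a : α) (k : ℕ) :
    ∑ σ : Fin (k + 1) → α, g (W (padSeq a σ) (k + 1))
      = ∑ σ : Fin k → α, ∑ i, g (F i (W (padSeq a σ) k)) := by
  rw [← (Fin.snocEquiv fun _ => α).sum_comp, Fintype.sum_prod_type, sum_comm]
  refine sum_congr rfl fun σ _ => sum_congr rfl fun i _ => ?_
  change g (W (padSeq a (Fin.snoc σ i : Fin (k + 1) → α)) (k + 1)) = _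
  rw [hWs, padSeq_snoc_self,
    rec_eq_of_eqOn_Iio hW0 hWs fun l hl => padSeq_snoc_of_lt a σ i hl]

end Recursion

theorem randomized_kaczmarz_linear_rate_general (m n : ℕ) (hm : 0 < m)
    (A : Matrix (Fin m) (Fin n) ℝ) (b : Fin m → ℝ)
    (hnorm : ∀ i, ∑ j, (A i j) ^ 2 = 1)
    (P : (Fin n → ℝ) → (Fin n → ℝ))
    (hPsol : ∀ w, A.mulVec (P w) = b)
    (hPproj : ∀ w v, A.mulVec v = b → ∑ j, (w j - P w j) ^ 2 ≤ ∑ j, (w j - v j) ^ 2)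
    (lmin : ℝ)
    (hlmin2 : ∀ v : Fin n → ℝ, (∃ u : Fin m → ℝ, A.transpose.mulVec u = v) →
      lmin * ∑ j, (v j) ^ 2 ≤ ∑ i, (A.mulVec v i) ^ 2)
    (w0 : Fin n → ℝ)
    (W : (ℕ → Fin m) → ℕ → (Fin n → ℝ))
    (hW0 : ∀ ω, W ω 0 = w0)
    (hWs : ∀ ω k, W ω (k + 1) =
      fun j => W ω k j - (A.mulVec (W ω k) (ω k) - b (ω k)) * A (ω k) j)
    (k : ℕ) :
    ((m : ℝ) ^ k)⁻¹ *
        (∑ ω : Fin k → Fin m,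
          ∑ j, (W (fun l => if h : l < k then ω ⟨l, h⟩ else ⟨0, hm⟩) k j
                 - P (W (fun l => if h : l < k then ω ⟨l, h⟩ else ⟨0, hm⟩) k) j) ^ 2)
      ≤ (1 - lmin / m) ^ k * ∑ j, (w0 j - P w0 j) ^ 2 := by
  simp only [sum_sub_sq_eq_dotProduct] at hPproj ⊢
  simp only [sum_sq_eq_dotProduct_self] at hnorm hlmin2
  have hWs' : ∀ ω k, W ω (k + 1) = kaczmarzStep A b (ω k) (W ω k) := hWs
  let d : (Fin n → ℝ) → ℝ := fun w => (w - P w) ⬝ᵥ (w - P w)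
  let T : ℕ → ℝ := fun j => ∑ σ : Fin j → Fin m, d (W (padSeq ⟨0, hm⟩ σ) j)
  have hTsucc : ∀ j, T (j + 1) ≤ (m - lmin) * T j := fun j => by
    refine (sum_rec_padSeq_succ hW0 hWs' d _ j).trans_le ?_
    rw [mul_sum]
    gcongr
    simpa only [Fintype.card_fin] using
      sum_kaczmarzStep_sub_dotProduct_self_le hnorm hPsol hPproj hlmin2 _
  have hlmin_le : lmin ≤ m := by
    have : Nonempty (Fin m) := ⟨⟨0, hm⟩⟩
    simpa only [Fintype.card_fin] using le_card_of_forall_mul_dotProduct_le hnorm hlmin2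
  calc ((m : ℝ) ^ k)⁻¹ * T k ≤ ((m : ℝ) ^ k)⁻¹ * ((m - lmin) ^ k * T 0) := by
        gcongr; exact le_geom (sub_nonneg.2 hlmin_le) k fun j _ => hTsucc j
    _ = _ := by
        have hT0 : T 0 = d w0 := by simp only [T, hW0, univ_unique, sum_singleton]
        rw [hT0, one_sub_div (by positivity), div_pow, div_eq_inv_mul, mul_assoc]

/-- Expected linear convergence of the randomized Kaczmarz method:
`E‖w^k - P(w^k)‖² ≤ (1 - λ_min,nz/m)^k ‖w⁰ - P(w⁰)‖²`, where `P` projects onto the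
solution set of the consistent system `Aw = b` with unit-norm rows, and `lmin` is the
smallest nonzero eigenvalue of `AAᵀ` (characterized by its quadratic-form lower bound
on the row space of `A`). -/
theorem randomized_kaczmarz_linear_rate (m n : ℕ) (hm : 0 < m)
    (A : Matrix (Fin m) (Fin n) ℝ) (b : Fin m → ℝ)
    (hnorm : ∀ i, ∑ j, (A i j) ^ 2 = 1)
    (hfeas : ∃ w, A.mulVec w = b)
    (P : (Fin n → ℝ) → (Fin n → ℝ))
    (hPsol : ∀ w, A.mulVec (P w) = b)
    (hPproj : ∀ w v, A.mulVec v = b → ∑ j, (w j - P w j) ^ 2 ≤ ∑ j, (w j - v j) ^ 2)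
    (lmin : ℝ) (hlmin : 0 < lmin)
    (hlmin2 : ∀ v : Fin n → ℝ, (∃ u : Fin m → ℝ, A.transpose.mulVec u = v) →
      lmin * ∑ j, (v j) ^ 2 ≤ ∑ i, (A.mulVec v i) ^ 2)
    (w0 : Fin n → ℝ)
    (W : (ℕ → Fin m) → ℕ → (Fin n → ℝ))
    (hW0 : ∀ ω, W ω 0 = w0)
    (hWs : ∀ ω k, W ω (k + 1) =
      fun j => W ω k j - (A.mulVec (W ω k) (ω k) - b (ω k)) * A (ω k) j)
    (k : ℕ) :
    ((m : ℝ) ^ k)⁻¹ *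
        (∑ ω : Fin k → Fin m,
          ∑ j, (W (fun l => if h : l < k then ω ⟨l, h⟩ else ⟨0, hm⟩) k j
                 - P (W (fun l => if h : l < k then ω ⟨l, h⟩ else ⟨0, hm⟩) k) j) ^ 2)
      ≤ (1 - lmin / m) ^ k * ∑ j, (w0 j - P w0 j) ^ 2 :=
  randomized_kaczmarz_linear_rate_general m n hm A b hnorm P hPsol hPproj lmin hlmin2 w0 W hW0 hWs k
end

section
/- If a symmetric positive semidefinite matrix H is diagonally dominant (H_{ii} ≥ Σ_{j≠i} |H_{ij}| for all i), then the maximum column Euclidean norm is at most twice the maximum diagonal entry: max_i ‖He_i‖₂ ≤ 2·max_i H_{ii}. -/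
/-! Row `i` of a diagonally dominant matrix has absolute row sum at most `2 H i i`; by symmetry
this bounds the `ℓ¹` norm of column `i`, which dominates its Euclidean norm. -/

open Finset

theorem Real.sqrt_sum_sq_le_sum_abs {ι : Type*} (s : Finset ι) (f : ι → ℝ) :
    √(∑ i ∈ s, f i ^ 2) ≤ ∑ i ∈ s, |f i| := by
  refine Real.sqrt_le_iff.mpr ⟨sum_nonneg fun i _ ↦ abs_nonneg (f i), ?_⟩
  simpa only [sq_abs] using sum_sq_le_sq_sum_of_nonneg fun i _ ↦ abs_nonneg (f i)

theorem Matrix.sum_abs_row_le_two_mul_diag {n R : Type*} [Fintype n] [DecidableEq n]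
    [Ring R] [LinearOrder R] [IsOrderedRing R] {A : Matrix n n R}
    (hA : ∀ i, ∑ j ∈ univ \ {i}, |A i j| ≤ A i i) (i : n) :
    ∑ j, |A i j| ≤ 2 * A i i := by
  have hdiag : 0 ≤ A i i := (sum_nonneg fun j _ ↦ abs_nonneg (A i j)).trans (hA i)
  rw [sum_eq_sum_sdiff_singleton_add (mem_univ i), abs_of_nonneg hdiag, two_mul]
  exact add_le_add_left (hA i) _

open Matrix in
theorem psd_diagonally_dominant_column_bound_general (n : ℕ)
    (H : Matrix (Fin n) (Fin n) ℝ)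
    (hpsd : H.PosSemidef)
    (hdd : ∀ i, ∑ j ∈ Finset.univ \ {i}, |H i j| ≤ H i i)
    (Lmax Lres : ℝ)
    (hLmax : IsGreatest {r : ℝ | ∃ i, r = H i i} Lmax)
    (hLres : IsGreatest {r : ℝ | ∃ i, r = Real.sqrt (∑ j, (H j i) ^ 2)} Lres) :
    Lres ≤ 2 * Lmax := by
  obtain ⟨i, rfl⟩ := hLres.1
  have hsymm : H.IsSymm := isHermitian_iff_isSymm.mp hpsd.isHermitian
  calc √(∑ j, H j i ^ 2) ≤ ∑ j, |H j i| := Real.sqrt_sum_sq_le_sum_abs _ _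
    _ = ∑ j, |H i j| := by simp only [hsymm.apply]
    _ ≤ 2 * H i i := sum_abs_row_le_two_mul_diag hdd i
    _ ≤ 2 * Lmax := by linarith [hLmax.2 ⟨i, rfl⟩]

/-- For a diagonally dominant symmetric PSD matrix, the maximum column Euclidean norm
is at most twice the maximum diagonal entry. -/
theorem psd_diagonally_dominant_column_bound (n : ℕ) (hn : 0 < n)
    (H : Matrix (Fin n) (Fin n) ℝ)
    (hpsd : H.PosSemidef)
    (hdd : ∀ i, ∑ j ∈ Finset.univ \ {i}, |H i j| ≤ H i i)
    (Lmax Lres : ℝ)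
    (hLmax : IsGreatest {r : ℝ | ∃ i, r = H i i} Lmax)
    (hLres : IsGreatest {r : ℝ | ∃ i, r = Real.sqrt (∑ j, (H j i) ^ 2)} Lres) :
    Lres ≤ 2 * Lmax :=
  psd_diagonally_dominant_column_bound_general n H hpsd hdd Lmax Lres hLmax hLres
end

section
/- For σ-strongly convex f with coordinate Lipschitz constant L_max and the surrogate H(x,z) := f(x) + ∇f(x)ᵀ(z-x) + (L_max/2)‖z-x‖² + λΩ(z), the minimum value satisfies min_z H(x,z) ≤ (σ/L_max)·h* + (1 - σ/L_max)·h(x), where h = f + λΩ and h* = min h. -/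
/-!
Evaluating the surrogate on the segment `z = α • x* + (1 - α) • x` with `α = σ / Lmax`:
the first-order strong-convexity bound gives `H(x,z) ≤ h(z) + ((Lmax - σ)/2)‖z - x‖²`, and the
`σ`-strong convexity of `h = f + λΩ` gives
`h(z) ≤ α h(x*) + (1 - α) h(x) - (σ/2) α (1 - α) ‖x* - x‖²`.
Since `‖z - x‖ = α ‖x* - x‖`, the two quadratic terms cancel exactly for this choice of `α`.
-/

open Set

variable {E : Type*} [NormedAddCommGroup E] [InnerProductSpace ℝ E]

theorem strongConvexOn_univ_of_add_inner_add_sq_le {f : E → ℝ} {g : E → E} {m : ℝ}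
    (hf : ∀ x y, f x + inner ℝ (g x) (y - x) + m / 2 * ‖y - x‖ ^ 2 ≤ f y) :
    StrongConvexOn univ m f := by
  refine ⟨convex_univ, fun x _ y _ a b ha _ hab => ?_⟩
  obtain rfl : b = 1 - a := eq_sub_of_add_eq' hab
  simp only [smul_eq_mul]
  set z := a • x + (1 - a) • y with hz
  have hxz : x - z = (1 - a) • (x - y) := by rw [hz]; module
  have hyz : y - z = (-a) • (x - y) := by rw [hz]; module
  have hx := hf z x
  have hy := hf z y
  rw [hxz, real_inner_smul_right, norm_smul, mul_pow, Real.norm_eq_abs, sq_abs] at hx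
  rw [hyz, real_inner_smul_right, norm_smul, mul_pow, Real.norm_eq_abs, sq_abs] at hy
  linear_combination a * hx + (1 - a) * hy

theorem StrongConvexOn.add_convexOn {s : Set E} {m : ℝ} {f g : E → ℝ}
    (hf : StrongConvexOn s m f) (hg : ConvexOn ℝ s g) : StrongConvexOn s m (f + g) := by
  simpa [StrongConvexOn] using hf.add (uniformConvexOn_zero.2 hg)

theorem StrongConvexOn.le_combo_of_le_add_sq {h H : E → ℝ} {σ L : ℝ}
    (hh : StrongConvexOn univ σ h) (hσ : 0 < σ) (hσL : σ ≤ L) {x : E}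
    (hH : ∀ z, H z ≤ h z + (L - σ) / 2 * ‖z - x‖ ^ 2) (y : E) :
    H ((σ / L) • y + (1 - σ / L) • x) ≤ σ / L * h y + (1 - σ / L) * h x := by
  have hL : 0 < L := hσ.trans_le hσL
  set α := σ / L
  have hα0 : 0 ≤ α := by positivity
  have hα1 : α ≤ 1 := (div_le_one hL).2 hσL
  have hαL : α * L = σ := div_mul_cancel₀ σ hL.ne'
  have hzx : ‖α • y + (1 - α) • x - x‖ = α * ‖y - x‖ := by
    rw [show α • y + (1 - α) • x - x = α • (y - x) by module, norm_smul,
      Real.norm_of_nonneg hα0]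
  have hconv := hh.2 (mem_univ y) (mem_univ x) hα0 (sub_nonneg.2 hα1) (add_sub_cancel α 1)
  simp only [smul_eq_mul] at hconv
  have hcancel : (L - σ) / 2 * (α * ‖y - x‖) ^ 2 = α * (1 - α) * (σ / 2 * ‖y - x‖ ^ 2) := by
    rw [← hαL]; ring
  calc H (α • y + (1 - α) • x)
      ≤ h (α • y + (1 - α) • x) + (L - σ) / 2 * (α * ‖y - x‖) ^ 2 := hzx ▸ hH _
    _ ≤ α * h y + (1 - α) * h x := by linarith

theorem surrogate_min_bound_general (n : ℕ)
    (f : EuclideanSpace ℝ (Fin n) → ℝ)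
    (g : EuclideanSpace ℝ (Fin n) → EuclideanSpace ℝ (Fin n))
    (σ Lmax lam : ℝ) (hσ : 0 < σ) (hσL : σ ≤ Lmax) (hlam : 0 < lam)
    (hsc : ∀ x y, f x + (inner ℝ (g x) (y - x) : ℝ) + σ / 2 * ‖y - x‖ ^ 2 ≤ f y)
    (Om : EuclideanSpace ℝ (Fin n) → ℝ) (hOm : ConvexOn ℝ Set.univ Om)
    (h : EuclideanSpace ℝ (Fin n) → ℝ)
    (hh : ∀ x, h x = f x + lam * Om x)
    (xstar : EuclideanSpace ℝ (Fin n))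
    (x : EuclideanSpace ℝ (Fin n)) :
    ∃ z : EuclideanSpace ℝ (Fin n),
      f x + (inner ℝ (g x) (z - x) : ℝ) + Lmax / 2 * ‖z - x‖ ^ 2 + lam * Om z
        ≤ σ / Lmax * h xstar + (1 - σ / Lmax) * h x := by
  have hh_eq : h = f + lam • Om := funext fun z => (hh z).trans rfl
  have h_strong : StrongConvexOn univ σ h := hh_eq ▸
    (strongConvexOn_univ_of_add_inner_add_sq_le hsc).add_convexOn (hOm.smul hlam.le)
  refine ⟨_, h_strong.le_combo_of_le_add_sq (H := fun z =>
    f x + inner ℝ (g x) (z - x) + Lmax / 2 * ‖z - x‖ ^ 2 + lam * Om z) hσ hσL (fun z => ?_) xstar⟩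
  have h_first_order := hsc x z
  rw [hh z]
  linarith

/-- The proximal surrogate `H(x,z) = f(x) + ⟪∇f(x), z-x⟫ + (Lmax/2)‖z-x‖² + λΩ(z)`
satisfies `min_z H(x,z) ≤ (σ/Lmax) h* + (1 - σ/Lmax) h(x)`. -/
theorem surrogate_min_bound (n : ℕ)
    (f : EuclideanSpace ℝ (Fin n) → ℝ)
    (g : EuclideanSpace ℝ (Fin n) → EuclideanSpace ℝ (Fin n))
    (hdiff : ∀ x, HasGradientAt f (g x) x)
    (σ Lmax lam : ℝ) (hσ : 0 < σ) (hσL : σ ≤ Lmax) (hlam : 0 < lam)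
    (hsc : ∀ x y, f x + (inner ℝ (g x) (y - x) : ℝ) + σ / 2 * ‖y - x‖ ^ 2 ≤ f y)
    (Om : EuclideanSpace ℝ (Fin n) → ℝ) (hOm : ConvexOn ℝ Set.univ Om)
    (h : EuclideanSpace ℝ (Fin n) → ℝ)
    (hh : ∀ x, h x = f x + lam * Om x)
    (xstar : EuclideanSpace ℝ (Fin n)) (hmin : ∀ x, h xstar ≤ h x)
    (x : EuclideanSpace ℝ (Fin n)) :
    ∃ z : EuclideanSpace ℝ (Fin n),
      f x + (inner ℝ (g x) (z - x) : ℝ) + Lmax / 2 * ‖z - x‖ ^ 2 + lam * Om z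
        ≤ σ / Lmax * h xstar + (1 - σ / Lmax) * h x :=
  surrogate_min_bound_general n f g σ Lmax lam hσ hσL hlam hsc Om hOm h hh xstar x
end

section
/- Gradient descent with constant steplength 1/L on a convex L-smooth function satisfies f(x^k) - f* ≤ 2L·R₀²/k for k ≥ 1. -/
/-!
The descent lemma for an `L`-Lipschitz gradient makes every step decrease `f` by at least
`‖∇f(xᵏ)‖² / (2L)`, so the iterates stay in the level set of `x⁰`, within `R₀` of a minimiser.
There convexity bounds the gap `Δₖ = f(xᵏ) - f*` by `‖∇f(xᵏ)‖ R₀`. Together these give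
`Δₖ² ≤ 2 L R₀² (Δₖ - Δₖ₊₁)`, and this recursion alone forces `k Δₖ ≤ 2 L R₀²`.
-/

open RealInnerProductSpace Set AffineMap

lemma image_one_le_of_deriv_le_affine {φ φ' : ℝ → ℝ} {a b : ℝ}
    (hφ : ∀ t ∈ Icc (0 : ℝ) 1, HasDerivAt φ (φ' t) t)
    (hbound : ∀ t ∈ Icc (0 : ℝ) 1, φ' t ≤ a + b * t) :
    φ 1 ≤ φ 0 + a + b / 2 := by
  have hB : ∀ t, HasDerivAt (fun s => φ 0 + (a * s + b / 2 * s ^ 2)) (a + b * t) t := fun t =>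
    ((((hasDerivAt_id t).const_mul a).add ((hasDerivAt_pow 2 t).const_mul (b / 2))).const_add
      (φ 0)).congr_deriv (by norm_num; ring)
  have := image_le_of_deriv_right_le_deriv_boundary (a := 0) (b := 1)
    (fun t ht => (hφ t ht).continuousAt.continuousWithinAt)
    (fun t ht => (hφ t (Ico_subset_Icc_self ht)).hasDerivWithinAt) (by simp)
    (fun t _ => (hB t).continuousAt.continuousWithinAt) (fun t _ => (hB t).hasDerivWithinAt)
    (fun t ht => hbound t (Ico_subset_Icc_self ht)) (right_mem_Icc.2 zero_le_one)
  norm_num at this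
  linarith

variable {E : Type*} [NormedAddCommGroup E] [InnerProductSpace ℝ E] [CompleteSpace E]
  {f : E → ℝ} {g : E → E} {L : ℝ}

lemma HasGradientAt.hasDerivAt_comp_lineMap {f' u y : E} {t : ℝ}
    (hf : HasGradientAt f f' (lineMap u y t)) :
    HasDerivAt (fun s => f (lineMap u y s)) ⟪f', y - u⟫ t := by
  have h := (hasGradientAt_iff_hasFDerivAt.1 hf).comp_hasDerivAt t hasDerivAt_lineMap
  simp only [InnerProductSpace.toDual_apply_apply] at h
  exact h

lemma ConvexOn.add_inner_sub_le_of_hasGradientAt {s : Set E} {f' u y : E}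
    (hf : ConvexOn ℝ s f) (hu : u ∈ s) (hy : y ∈ s) (hgrad : HasGradientAt f f' u) :
    f u + ⟪f', y - u⟫ ≤ f y := by
  have hline : ConvexOn ℝ (lineMap u y ⁻¹' s) (fun t => f (lineMap u y t)) :=
    hf.comp_affineMap (lineMap u y)
  have := hline.le_slope_of_hasDerivAt (by simpa using hu) (by simpa using hy) zero_lt_one
    (HasGradientAt.hasDerivAt_comp_lineMap (by simpa using hgrad))
  simp only [slope_def_field, lineMap_apply_one, lineMap_apply_zero, sub_zero, div_one] at this
  linarith

lemma ConvexOn.sub_le_norm_mul_norm_sub_of_hasGradientAt {s : Set E} {f' u y : E}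
    (hf : ConvexOn ℝ s f) (hu : u ∈ s) (hy : y ∈ s) (hgrad : HasGradientAt f f' u) :
    f u - f y ≤ ‖f'‖ * ‖u - y‖ := by
  have hsupp := hf.add_inner_sub_le_of_hasGradientAt hu hy hgrad
  have hcs : ⟪f', u - y⟫ ≤ ‖f'‖ * ‖u - y‖ := real_inner_le_norm _ _
  rw [← neg_sub u y, inner_neg_right] at hsupp
  linarith

lemma le_add_inner_sub_add_half_mul_norm_sq_of_lipschitz_gradient
    (hgrad : ∀ x, HasGradientAt f (g x) x) (hLip : ∀ x y, ‖g x - g y‖ ≤ L * ‖x - y‖) (u y : E) :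
    f y ≤ f u + ⟪g u, y - u⟫ + L / 2 * ‖y - u‖ ^ 2 := by
  have key := image_one_le_of_deriv_le_affine (φ := fun s => f (lineMap u y s))
    (a := ⟪g u, y - u⟫) (b := L * ‖y - u‖ ^ 2)
    (fun t _ => (hgrad _).hasDerivAt_comp_lineMap) fun t ht => ?_
  · simp only [lineMap_apply_one, lineMap_apply_zero] at key
    linarith
  have hdist : ‖lineMap u y t - u‖ = t * ‖y - u‖ := by
    rw [lineMap_apply, vsub_eq_sub, vadd_eq_add, add_sub_cancel_right, norm_smul,
      Real.norm_of_nonneg ht.1]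
  calc ⟪g (lineMap u y t), y - u⟫ = ⟪g u, y - u⟫ + ⟪g (lineMap u y t) - g u, y - u⟫ := by
        rw [inner_sub_left]; ring
    _ ≤ ⟪g u, y - u⟫ + ‖g (lineMap u y t) - g u‖ * ‖y - u‖ := by
        gcongr; exact real_inner_le_norm _ _
    _ ≤ ⟪g u, y - u⟫ + L * (t * ‖y - u‖) * ‖y - u‖ := by
        gcongr; exact hdist ▸ hLip _ _
    _ = ⟪g u, y - u⟫ + L * ‖y - u‖ ^ 2 * t := by ring

lemma le_sub_norm_sq_div_of_lipschitz_gradient (hL : 0 < L)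
    (hgrad : ∀ x, HasGradientAt f (g x) x) (hLip : ∀ x y, ‖g x - g y‖ ≤ L * ‖x - y‖) (u : E) :
    f (u - (1 / L) • g u) ≤ f u - ‖g u‖ ^ 2 / (2 * L) := by
  have := le_add_inner_sub_add_half_mul_norm_sq_of_lipschitz_gradient hgrad hLip u
    (u - (1 / L) • g u)
  rw [sub_sub_cancel_left, inner_neg_right, inner_smul_right, real_inner_self_eq_norm_sq,
    norm_neg, norm_smul, Real.norm_of_nonneg (by positivity)] at this
  convert this using 1
  field_simp
  ring

lemma ConvexOn.sq_sub_le_of_lipschitz_gradient (hf : ConvexOn ℝ univ f) (hL : 0 < L)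
    (hgrad : ∀ x, HasGradientAt f (g x) x) (hLip : ∀ x y, ‖g x - g y‖ ≤ L * ‖x - y‖)
    {u xmin : E} (hmin : ∀ x, f xmin ≤ f x) {R : ℝ} (hR : ‖u - xmin‖ ≤ R) :
    (f u - f xmin) ^ 2 ≤ 2 * L * R ^ 2 * (f u - f (u - (1 / L) • g u)) := by
  have hgap : f u - f xmin ≤ ‖g u‖ * R :=
    (hf.sub_le_norm_mul_norm_sub_of_hasGradientAt (mem_univ u) (mem_univ xmin) (hgrad u)).trans
      (by gcongr)
  have hgrad_sq : ‖g u‖ ^ 2 ≤ 2 * L * (f u - f (u - (1 / L) • g u)) := by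
    have := le_sub_norm_sq_div_of_lipschitz_gradient hL hgrad hLip u
    rw [le_sub_comm, div_le_iff₀ (by positivity)] at this
    linarith
  calc (f u - f xmin) ^ 2 ≤ (‖g u‖ * R) ^ 2 := by gcongr; exact sub_nonneg.2 (hmin u)
    _ ≤ 2 * L * (f u - f (u - (1 / L) • g u)) * R ^ 2 := by rw [mul_pow]; gcongr
    _ = _ := by ring

lemma nat_mul_le_of_sq_le_mul_sub {a : ℕ → ℝ} {c : ℝ} (ha : ∀ j, 0 ≤ a j) (hc : 0 ≤ c)
    (hrec : ∀ j, a j ^ 2 ≤ c * (a j - a (j + 1))) (k : ℕ) : k * a k ≤ c := by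
  rcases hc.eq_or_lt with rfl | hc
  · have : a k = 0 := pow_eq_zero_iff two_ne_zero |>.1 <| le_antisymm (by simpa using hrec k)
      (sq_nonneg _)
    simp [this]
  induction k with
  | zero => simpa using hc.le
  | succ k ih =>
    have hle : a k ≤ c := by nlinarith [hrec k, ha (k + 1)]
    have hk : (0 : ℝ) ≤ k + 1 := by positivity
    -- `c² - (k+1) c t + (k+1) t² = (c - k t)(c - t) + t²` with `t = a k`
    have : c * ((k + 1) * a (k + 1)) ≤ c * c := by
      nlinarith [mul_le_mul_of_nonneg_left (hrec k) hk,
        mul_nonneg (sub_nonneg.2 ih) (sub_nonneg.2 hle), sq_nonneg (a k)]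
    push_cast
    exact le_of_mul_le_mul_left this hc

/-- Sublinear rate of gradient descent with constant steplength `1/L` on a convex
`L`-smooth function: `f(x^k) - f* ≤ 2 L R₀² / k`. -/
theorem gradient_descent_sublinear_rate (n : ℕ)
    (f : EuclideanSpace ℝ (Fin n) → ℝ)
    (g : EuclideanSpace ℝ (Fin n) → EuclideanSpace ℝ (Fin n))
    (hconv : ConvexOn ℝ Set.univ f)
    (hdiff : ∀ x, HasGradientAt f (g x) x)
    (L : ℝ) (hL : 0 < L)
    (hLip : ∀ x y, ‖g x - g y‖ ≤ L * ‖x - y‖)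
    (fstar : ℝ) (hfstar : ∀ x, fstar ≤ f x) (hattain : ∃ x, f x = fstar)
    (x0 : EuclideanSpace ℝ (Fin n)) (R0 : ℝ)
    (hR0 : ∀ xstar, f xstar = fstar → ∀ x, f x ≤ f x0 → ‖x - xstar‖ ≤ R0)
    (x : ℕ → EuclideanSpace ℝ (Fin n))
    (hx0 : x 0 = x0)
    (hxs : ∀ k, x (k + 1) = x k - (1 / L) • g (x k))
    (k : ℕ) (hk : 1 ≤ k) :
    f (x k) - fstar ≤ 2 * L * R0 ^ 2 / k := by
  obtain ⟨xstar, rfl⟩ := hattain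
  have hanti : Antitone (f ∘ x) := antitone_nat_of_succ_le fun j => by
    simp only [Function.comp_apply, hxs j]
    exact (le_sub_norm_sq_div_of_lipschitz_gradient hL hdiff hLip (x j)).trans
      (sub_le_self _ (by positivity))
  have hdist (j : ℕ) : ‖x j - xstar‖ ≤ R0 :=
    hR0 xstar rfl (x j) (hx0 ▸ hanti (Nat.zero_le j))
  have hrec (j : ℕ) : (f (x j) - f xstar) ^ 2
      ≤ 2 * L * R0 ^ 2 * ((f (x j) - f xstar) - (f (x (j + 1)) - f xstar)) := by
    rw [sub_sub_sub_cancel_right, hxs j]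
    exact hconv.sq_sub_le_of_lipschitz_gradient hL hdiff hLip hfstar (hdist j)
  have hrate := nat_mul_le_of_sq_le_mul_sub (fun j => sub_nonneg.2 (hfstar (x j)))
    (by positivity) hrec k
  rw [le_div_iff₀ (by exact_mod_cast hk)]
  linarith
end
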